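/- arXiv:2404.07659 — 2 statements merged into one kernel-verified Lean document; each statement's English description precedes it below -/
import Mathlib

section
/- Suppose φ_i, ψ_i : ℝ^{d+1} → ℝ are smooth, φ_i → φ₀ and ψ_i → ψ₀ uniformly on compact sets, ∂φ_i ⇀ ∂φ₀ and ∂ψ_i ⇀ ∂ψ₀ weakly in L²_loc, and □φ_i ⇀ □φ₀, □ψ_i ⇀ □ψ₀ weakly in L²_loc, where □ is a constant-coefficient wave operator □u = Σ g^{αβ}∂²_{αβ}u. Then Q_0(φ_i,ψ_i) := Σ g^{αβ} ∂_α φ_i ∂_β ψ_i converges in the sense of distributions to Q_0(φ₀,ψ₀). -/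
open MeasureTheory Filter

/-- The partial derivative in the `α`-th coordinate direction. -/
noncomputable def pd {n : ℕ} (α : Fin n) (f : (Fin n → ℝ) → ℝ) : (Fin n → ℝ) → ℝ :=
  fun x => fderiv ℝ f x (Pi.single α 1)

/-- The constant-coefficient wave operator `□u = Σ g^{αβ} ∂²_{αβ} u`. -/
noncomputable def Box {n : ℕ} (g : Matrix (Fin n) (Fin n) ℝ)
    (u : (Fin n → ℝ) → ℝ) : (Fin n → ℝ) → ℝ :=
  fun x => ∑ α, ∑ β, g α β * pd α (pd β u) x

variable {n : ℕ}

lemma pd_contDiff {f : (Fin n → ℝ) → ℝ} (hf : ContDiff ℝ (⊤ : ℕ∞) f) (α : Fin n) :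
    ContDiff ℝ (⊤ : ℕ∞) (pd α f) := by
  have h1 : ContDiff ℝ (⊤ : ℕ∞) (fderiv ℝ f) := hf.fderiv_right (by simp)
  exact (ContinuousLinearMap.apply ℝ ℝ (Pi.single α (1:ℝ))).contDiff.comp h1

lemma pd_continuous {f : (Fin n → ℝ) → ℝ} (hf : ContDiff ℝ (⊤ : ℕ∞) f) (α : Fin n) :
    Continuous (pd α f) := (pd_contDiff hf α).continuous

lemma hasCompactSupport_pd {f : (Fin n → ℝ) → ℝ} (hf : HasCompactSupport f) (α : Fin n) :
    HasCompactSupport (pd α f) := by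
  have := hf.fderiv (𝕜 := ℝ)
  exact this.comp_left (g := fun L : (Fin n → ℝ) →L[ℝ] ℝ => L (Pi.single α 1)) (by simp)

lemma box_continuous {g : Matrix (Fin n) (Fin n) ℝ} {f : (Fin n → ℝ) → ℝ}
    (hf : ContDiff ℝ (⊤ : ℕ∞) f) : Continuous (Box g f) := by
  unfold Box
  refine continuous_finset_sum _ fun α _ => continuous_finset_sum _ fun β _ => ?_
  exact continuous_const.mul (pd_continuous (pd_contDiff hf β) α)

lemma integ_mul {F χ : (Fin n → ℝ) → ℝ} (hF : Continuous F) (hχ : Continuous χ)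
    (hχc : HasCompactSupport χ) : Integrable (fun x => F x * χ x) := by
  exact (hF.mul hχ).integrable_of_hasCompactSupport (hχc.mul_left)

lemma parts (α : Fin n) {f w : (Fin n → ℝ) → ℝ} (hf : ContDiff ℝ (⊤ : ℕ∞) f)
    (hw : ContDiff ℝ (⊤ : ℕ∞) w) (hcw : HasCompactSupport w) :
    ∫ x, pd α f x * w x = -∫ x, f x * pd α w x := by
  have h := integral_mul_fderiv_eq_neg_fderiv_mul_of_integrable
    (μ := (volume : Measure (Fin n → ℝ))) (f := f) (g := w) (v := Pi.single α 1)
    ?_ ?_ ?_ (fun x _ => hf.differentiable (by simp) x) (fun x _ => hw.differentiable (by simp) x)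
  · rw [show (fun x => pd α f x * w x) = fun x => fderiv ℝ f x (Pi.single α 1) * w x from rfl]
    rw [show (fun x => f x * pd α w x) = fun x => f x * fderiv ℝ w x (Pi.single α 1) from rfl]
    linarith [h]
  · exact integ_mul (pd_continuous hf α) hw.continuous hcw
  · exact integ_mul hf.continuous (pd_continuous hw α) (hasCompactSupport_pd hcw α)
  · exact integ_mul hf.continuous hw.continuous hcw

lemma parts2 (α β : Fin n) {f w : (Fin n → ℝ) → ℝ} (hf : ContDiff ℝ (⊤ : ℕ∞) f)
    (hw : ContDiff ℝ (⊤ : ℕ∞) w) (hcw : HasCompactSupport w) :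
    ∫ x, pd α (pd β f) x * w x = ∫ x, f x * pd β (pd α w) x := by
  rw [parts α (pd_contDiff hf β) hw hcw]
  have : ∫ x, pd β f x * pd α w x = -∫ x, f x * pd β (pd α w) x :=
    parts β hf (pd_contDiff hw α) (hasCompactSupport_pd hcw α)
  rw [this, neg_neg]

lemma box_parts {g : Matrix (Fin n) (Fin n) ℝ} (hg : g.IsSymm)
    {f w : (Fin n → ℝ) → ℝ} (hf : ContDiff ℝ (⊤ : ℕ∞) f)
    (hw : ContDiff ℝ (⊤ : ℕ∞) w) (hcw : HasCompactSupport w) :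
    ∫ x, Box g f x * w x = ∫ x, f x * Box g w x := by
  have hint : ∀ (u v : (Fin n → ℝ) → ℝ) (_ : ContDiff ℝ (⊤ : ℕ∞) u) (α β : Fin n),
      Integrable (fun x => g α β * pd α (pd β u) x * w x) := by
    intro u v hu α β
    simpa [mul_assoc] using (integ_mul ((pd_continuous (pd_contDiff hu β) α))
        hw.continuous hcw).const_mul (g α β)
  calc ∫ x, Box g f x * w x
      = ∫ x, ∑ α, ∑ β, g α β * pd α (pd β f) x * w x := by
        unfold Box; congr 1; ext x; rw [Finset.sum_mul]; congr 1; ext α; rw [Finset.sum_mul]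
    _ = ∑ α, ∑ β, ∫ x, g α β * pd α (pd β f) x * w x := by
        rw [integral_finset_sum]
        · exact Finset.sum_congr rfl fun α _ => integral_finset_sum _ fun β _ => hint f w hf α β
        · exact fun α _ => integrable_finset_sum _ fun β _ => hint f w hf α β
    _ = ∑ α, ∑ β, g α β * ∫ x, pd α (pd β f) x * w x := by
        simp_rw [mul_assoc, integral_const_mul]
    _ = ∑ α, ∑ β, g α β * ∫ x, f x * pd β (pd α w) x := by
        simp_rw [fun α β => parts2 α β hf hw hcw]
    _ = ∑ α, ∑ β, g α β * ∫ x, f x * pd α (pd β w) x := by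
        rw [Finset.sum_comm]
        exact Finset.sum_congr rfl fun α _ => Finset.sum_congr rfl fun β _ => by
          rw [hg.apply α β]
    _ = ∫ x, f x * Box g w x := by
        rw [show (fun x => f x * Box g w x)
            = fun x => ∑ α, ∑ β, g α β * (f x * pd α (pd β w) x) from ?_]
        · rw [integral_finset_sum]
          · refine Finset.sum_congr rfl fun α _ => ?_
            rw [integral_finset_sum]
            · simp_rw [integral_const_mul]
            · intro β _
              exact (integ_mul hf.continuous (pd_continuous (pd_contDiff hw β) α)
                (hasCompactSupport_pd (hasCompactSupport_pd hcw β) α)).const_mul _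
          · intro α _
            refine integrable_finset_sum _ fun β _ => ?_
            exact (integ_mul hf.continuous (pd_continuous (pd_contDiff hw β) α)
                (hasCompactSupport_pd (hasCompactSupport_pd hcw β) α)).const_mul _
        · ext x
          rw [Box, Finset.mul_sum]
          refine Finset.sum_congr rfl fun α _ => ?_
          rw [Finset.mul_sum]
          exact Finset.sum_congr rfl fun β _ => by ring

lemma pd_mul {f h : (Fin n → ℝ) → ℝ} (hf : Differentiable ℝ f) (hh : Differentiable ℝ h)
    (α : Fin n) : pd α (fun y => f y * h y) = fun x => pd α f x * h x + f x * pd α h x := by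
  ext x
  unfold pd
  rw [fderiv_fun_mul (hf x) (hh x)]
  simp only [ContinuousLinearMap.add_apply, ContinuousLinearMap.coe_smul', Pi.smul_apply, smul_eq_mul]
  ring

lemma pd_add {f h : (Fin n → ℝ) → ℝ} (hf : Differentiable ℝ f) (hh : Differentiable ℝ h)
    (α : Fin n) : pd α (fun y => f y + h y) = fun x => pd α f x + pd α h x := by
  ext x
  unfold pd
  rw [fderiv_fun_add (hf x) (hh x)]
  simp

lemma box_mul {g : Matrix (Fin n) (Fin n) ℝ} (hg : g.IsSymm)
    {f h : (Fin n → ℝ) → ℝ} (hf : ContDiff ℝ (⊤ : ℕ∞) f) (hh : ContDiff ℝ (⊤ : ℕ∞) h) (x : Fin n → ℝ) :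
    Box g (fun y => f y * h y) x
      = Box g f x * h x + 2 * (∑ α, ∑ β, g α β * pd α f x * pd β h x) + f x * Box g h x := by
  have hfd := hf.differentiable (by simp)
  have hhd := hh.differentiable (by simp)
  have key : ∀ α β : Fin n, pd α (pd β (fun y => f y * h y)) x
      = pd α (pd β f) x * h x + pd β f x * pd α h x + pd α f x * pd β h x
        + f x * pd α (pd β h) x := by
    intro α β
    have e1 : pd β (fun y => f y * h y) = fun y => pd β f y * h y + f y * pd β h y :=
      pd_mul hfd hhd β
    rw [e1, pd_add (f := fun y => pd β f y * h y) (h := fun y => f y * pd β h y)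
      ((pd_contDiff hf β).differentiable (by simp) |>.mul hhd)
      (hfd.mul ((pd_contDiff hh β).differentiable (by simp))) α,
      pd_mul ((pd_contDiff hf β).differentiable (by simp)) hhd α,
      pd_mul hfd ((pd_contDiff hh β).differentiable (by simp)) α]
    ring
  unfold Box
  simp_rw [key]
  have swap : ∑ α, ∑ β, g α β * (pd β f x * pd α h x)
      = ∑ α, ∑ β, g α β * (pd α f x * pd β h x) := by
    rw [Finset.sum_comm]
    exact Finset.sum_congr rfl fun α _ => Finset.sum_congr rfl fun β _ => by
      rw [hg.apply α β]
  calc ∑ α, ∑ β, g α β * (pd α (pd β f) x * h x + pd β f x * pd α h x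
        + pd α f x * pd β h x + f x * pd α (pd β h) x)
      = (∑ α, ∑ β, g α β * pd α (pd β f) x) * h x
        + (∑ α, ∑ β, g α β * (pd β f x * pd α h x))
        + (∑ α, ∑ β, g α β * (pd α f x * pd β h x))
        + f x * ∑ α, ∑ β, g α β * pd α (pd β h) x := by
        simp_rw [Finset.sum_mul, Finset.mul_sum, ← Finset.sum_add_distrib]
        exact Finset.sum_congr rfl fun α _ => Finset.sum_congr rfl fun β _ => by ring
    _ = _ := by
        rw [swap]
        have : ∑ α, ∑ β, g α β * (pd α f x * pd β h x)
            = ∑ α, ∑ β, g α β * pd α f x * pd β h x := by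
          simp_rw [mul_assoc]
        rw [this]; ring

lemma q0_continuous {g : Matrix (Fin n) (Fin n) ℝ} {f h : (Fin n → ℝ) → ℝ}
    (hf : ContDiff ℝ (⊤ : ℕ∞) f) (hh : ContDiff ℝ (⊤ : ℕ∞) h) :
    Continuous (fun x => ∑ α, ∑ β, g α β * pd α f x * pd β h x) := by
  refine continuous_finset_sum _ fun α _ => continuous_finset_sum _ fun β _ => ?_
  exact (continuous_const.mul (pd_continuous hf α)).mul (pd_continuous hh β)

/-- The main integral identity: `2∫ Q₀(f,h) χ = ∫ f h □χ − ∫ (□f) h χ − ∫ f (□h) χ`. -/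
lemma main_id {g : Matrix (Fin n) (Fin n) ℝ} (hg : g.IsSymm)
    {f h χ : (Fin n → ℝ) → ℝ} (hf : ContDiff ℝ (⊤ : ℕ∞) f) (hh : ContDiff ℝ (⊤ : ℕ∞) h)
    (hχ : ContDiff ℝ (⊤ : ℕ∞) χ) (hχc : HasCompactSupport χ) :
    ∫ x, (∑ α, ∑ β, g α β * pd α f x * pd β h x) * χ x
      = ((∫ x, (f x * h x) * Box g χ x) - (∫ x, Box g f x * (h x * χ x))
          - (∫ x, Box g h x * (f x * χ x))) / 2 := by
  have hfh : ContDiff ℝ (⊤ : ℕ∞) (fun y => f y * h y) := hf.mul hh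
  have e1 : ∫ x, (f x * h x) * Box g χ x = ∫ x, Box g (fun y => f y * h y) x * χ x :=
    (box_parts hg hfh hχ hχc).symm
  beta_reduce at e1
  rw [e1]
  have key : ∀ x, Box g (fun y => f y * h y) x * χ x
      = Box g f x * (h x * χ x) + 2 * ((∑ α, ∑ β, g α β * pd α f x * pd β h x) * χ x)
        + Box g h x * (f x * χ x) := by
    intro x
    rw [box_mul hg hf hh x]
    ring
  simp_rw [key]
  have i1 : Integrable (fun x => Box g f x * (h x * χ x)) :=
    integ_mul (box_continuous hf) (hh.continuous.mul hχ.continuous) (hχc.mul_left)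
  have i2 : Integrable (fun x => 2 * ((∑ α, ∑ β, g α β * pd α f x * pd β h x) * χ x)) :=
    ((integ_mul (q0_continuous hf hh) hχ.continuous hχc).const_mul 2)
  have i3 : Integrable (fun x => Box g h x * (f x * χ x)) :=
    integ_mul (box_continuous hh) (hf.continuous.mul hχ.continuous) (hχc.mul_left)
  have h12 : Integrable (fun x => Box g f x * (h x * χ x)
      + 2 * ((∑ α, ∑ β, g α β * pd α f x * pd β h x) * χ x)) := i1.add i2
  rw [integral_add h12 i3, integral_add i1 i2, integral_const_mul]
  ring

/-- Locally uniform convergence pairs with a fixed continuous compactly supported factor. -/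
lemma tendsto_integral_of_locallyUniform {F : ℕ → (Fin n → ℝ) → ℝ} {F₀ : (Fin n → ℝ) → ℝ}
    {χ : (Fin n → ℝ) → ℝ} (hF : ∀ i, Continuous (F i)) (hF₀ : Continuous F₀)
    (hχ : Continuous χ) (hχc : HasCompactSupport χ)
    (hFu : TendstoLocallyUniformly F F₀ atTop) :
    Tendsto (fun i => ∫ x, F i x * χ x) atTop (nhds (∫ x, F₀ x * χ x)) := by
  set K := tsupport χ with hK
  have hKc : IsCompact K := hχc
  have hKm : MeasurableSet K := hKc.isClosed.measurableSet
  have hzero : ∀ (G : (Fin n → ℝ) → ℝ), ∀ x ∉ K, G x * χ x = 0 := by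
    intro G x hx
    rw [image_eq_zero_of_notMem_tsupport hx, mul_zero]
  have hrw : ∀ (G : (Fin n → ℝ) → ℝ), ∫ x, G x * χ x = ∫ x in K, G x * χ x := by
    intro G
    exact (setIntegral_eq_integral_of_forall_compl_eq_zero (hzero G)).symm
  simp_rw [hrw]
  have hUK : TendstoUniformlyOn F F₀ atTop K :=
    (tendstoLocallyUniformly_iff_forall_isCompact.1 hFu) K hKc
  refine tendsto_integral_filter_of_dominated_convergence
    (bound := fun x => (|F₀ x| + 1) * |χ x|) ?_ ?_ ?_ ?_
  · exact Eventually.of_forall fun i =>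
      ((hF i).mul hχ).aestronglyMeasurable.restrict
  · have := Metric.tendstoUniformlyOn_iff.1 hUK 1 one_pos
    filter_upwards [this] with i hi
    refine ae_restrict_of_forall_mem hKm fun x hx => ?_
    have h1 : |F₀ x - F i x| < 1 := by
      have := hi x hx
      rwa [Real.dist_eq] at this
    have h2 : |F i x| ≤ |F₀ x| + 1 := by
      have : |F i x| - |F₀ x| ≤ |F i x - F₀ x| := by
        have := abs_sub_abs_le_abs_sub (F i x) (F₀ x); linarith
      rw [abs_sub_comm] at h1
      linarith
    rw [norm_mul]
    exact mul_le_mul_of_nonneg_right h2 (abs_nonneg _)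
  · exact (((hF₀.abs.add continuous_const).mul hχ.abs).locallyIntegrable).integrableOn_isCompact
      hKc
  · refine ae_restrict_of_forall_mem hKm fun x _ => ?_
    exact ((hFu.tendstoLocallyUniformlyOn.tendsto_at (Set.mem_univ x)).mul tendsto_const_nhds)

lemma memℒp_indicator_of_continuous {b : (Fin n → ℝ) → ℝ} (hb : Continuous b)
    {K : Set (Fin n → ℝ)} (hK : IsCompact K) : MemLp (K.indicator b) 2 volume := by
  have hKm : MeasurableSet K := hK.isClosed.measurableSet
  obtain ⟨C, hC⟩ := hK.exists_bound_of_continuousOn hb.continuousOn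
  refine MemLp.of_le (memLp_indicator_const 2 hKm (|C| : ℝ) (Or.inr hK.measure_lt_top.ne))
    ((hb.stronglyMeasurable.indicator hKm).aestronglyMeasurable) ?_
  refine Eventually.of_forall fun x => ?_
  by_cases hx : x ∈ K
  · simp only [Set.indicator_of_mem hx]
    calc ‖b x‖ ≤ C := hC x hx
      _ ≤ |C| := le_abs_self C
      _ ≤ ‖|C|‖ := le_abs_self _
  · simp [Set.indicator_of_notMem hx]

/-- Weak L² convergence paired with a locally-uniformly convergent strong factor,
on a fixed compactly supported window. -/
lemma weak_strong_pairing {b : ℕ → (Fin n → ℝ) → ℝ} {b₀ : (Fin n → ℝ) → ℝ}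
    (hb : ∀ i, Continuous (b i))
    (hbw : ∀ w : (Fin n → ℝ) → ℝ, HasCompactSupport w → MemLp w 2 volume →
      Tendsto (fun i => ∫ x, b i x * w x) atTop (nhds (∫ x, b₀ x * w x)))
    {v : ℕ → (Fin n → ℝ) → ℝ} {v₀ : (Fin n → ℝ) → ℝ}
    (hv : ∀ i, Continuous (v i)) (hv₀ : Continuous v₀)
    (hvu : TendstoLocallyUniformly v v₀ atTop)
    {χ : (Fin n → ℝ) → ℝ} (hχ : Continuous χ) (hχc : HasCompactSupport χ) :
    Tendsto (fun i => ∫ x, b i x * (v i x * χ x)) atTop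
      (nhds (∫ x, b₀ x * (v₀ x * χ x))) := by
  set K := tsupport χ with hKdef
  have hKc : IsCompact K := hχc
  have hKm : MeasurableSet K := hKc.isClosed.measurableSet
  have hχK : ∀ x ∉ K, χ x = 0 := fun x hx => image_eq_zero_of_notMem_tsupport hx
  -- the Lp elements 1_K · b i
  have hmem : ∀ i, MemLp (K.indicator (b i)) 2 volume :=
    fun i => memℒp_indicator_of_continuous (hb i) hKc
  set fL : ℕ → Lp ℝ 2 (volume : Measure (Fin n → ℝ)) := fun i => (hmem i).toLp _ with hfL
  -- uniform L² bound via Banach–Steinhaus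
  obtain ⟨C', hC'⟩ : ∃ C', ∀ i, ‖innerSL ℝ (fL i)‖ ≤ C' := by
    apply banach_steinhaus
    intro u
    set w : (Fin n → ℝ) → ℝ := K.indicator u with hwdef
    have hwc : HasCompactSupport w := HasCompactSupport.intro hKc
      (fun x hx => Set.indicator_of_notMem hx _)
    have hwm : MemLp w 2 volume := (Lp.memLp u).indicator hKm
    have hconv := hbw w hwc hwm
    have habs : Tendsto (fun i => |∫ x, b i x * w x|) atTop (nhds |∫ x, b₀ x * w x|) :=
      hconv.abs
    obtain ⟨C, hC⟩ := habs.bddAbove_range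
    refine ⟨C, fun i => ?_⟩
    have key : (innerSL ℝ (fL i)) u = ∫ x, b i x * w x := by
      rw [innerSL_apply_apply, MeasureTheory.L2.inner_def]
      refine integral_congr_ae ?_
      filter_upwards [(hmem i).coeFn_toLp] with x hx
      rw [RCLike.inner_apply, conj_trivial, hx]
      by_cases hxK : x ∈ K
      · simp [hwdef, Set.indicator_of_mem hxK, mul_comm]
      · simp [hwdef, Set.indicator_of_notMem hxK]
    rw [key]
    exact hC ⟨i, rfl⟩
  have hnorm : ∀ i, ‖fL i‖ ≤ C' := fun i => by
    rw [← innerSL_apply_norm (𝕜 := ℝ)]; exact hC' i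
  -- decomposition
  have hdecomp : ∀ i, (∫ x, b i x * (v i x * χ x))
      = (∫ x, b i x * (v₀ x * χ x)) + ∫ x, b i x * ((v i x - v₀ x) * χ x) := by
    intro i
    rw [← integral_add (f := fun x => b i x * (v₀ x * χ x))
      (g := fun x => b i x * ((v i x - v₀ x) * χ x)) (integ_mul (hb i) (hv₀.mul hχ) hχc.mul_left)
      (integ_mul (hb i) (((hv i).sub hv₀).mul hχ) hχc.mul_left)]
    congr 1; ext x; ring
  simp_rw [hdecomp]
  rw [show (∫ x, b₀ x * (v₀ x * χ x)) = (∫ x, b₀ x * (v₀ x * χ x)) + 0 by ring]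
  refine Tendsto.add (hbw _ hχc.mul_left ((hv₀.mul hχ).memLp_of_hasCompactSupport
    hχc.mul_left)) ?_
  -- error term → 0
  have hUK : TendstoUniformlyOn v v₀ atTop K :=
    (tendstoLocallyUniformly_iff_forall_isCompact.1 hvu) K hKc
  have hwmem : ∀ i, MemLp (fun x => (v i x - v₀ x) * χ x) 2 volume := fun i =>
    (((hv i).sub hv₀).mul hχ).memLp_of_hasCompactSupport hχc.mul_left
  set wL : ℕ → Lp ℝ 2 (volume : Measure (Fin n → ℝ)) := fun i => (hwmem i).toLp _ with hwL
  have hpair : ∀ i, (∫ x, b i x * ((v i x - v₀ x) * χ x))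
      = inner (𝕜 := ℝ) (fL i) (wL i) := by
    intro i
    rw [MeasureTheory.L2.inner_def]
    refine (integral_congr_ae ?_).symm
    filter_upwards [(hmem i).coeFn_toLp, (hwmem i).coeFn_toLp] with x h1 h2
    rw [RCLike.inner_apply, conj_trivial, h1, h2]
    by_cases hx : x ∈ K
    · simp [Set.indicator_of_mem hx, mul_comm]
    · simp [Set.indicator_of_notMem hx, hχK x hx]
  have hwL0 : Tendsto (fun i => ‖wL i‖) atTop (nhds 0) := by
    have hχ2 : MemLp χ 2 volume := hχ.memLp_of_hasCompactSupport hχc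
    set M : ℝ := (eLpNorm χ 2 volume).toReal with hM
    have hM0 : 0 ≤ M := ENNReal.toReal_nonneg
    rw [Metric.tendsto_atTop]
    intro ε hε
    have hδ : (0:ℝ) < ε / (M + 1) := by positivity
    obtain ⟨N, hN⟩ :=
      (Metric.tendstoUniformlyOn_iff.1 hUK (ε / (M + 1)) hδ).exists_forall_of_atTop
    refine ⟨N, fun i hi => ?_⟩
    have hb2 : ∀ x, ‖(v i x - v₀ x) * χ x‖ ≤ ‖(ε / (M + 1)) * χ x‖ := by
      intro x
      by_cases hx : x ∈ K
      · have hd := hN i hi x hx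
        rw [Real.dist_eq, abs_sub_comm] at hd
        rw [norm_mul, norm_mul]
        refine mul_le_mul_of_nonneg_right ?_ (norm_nonneg _)
        rw [Real.norm_eq_abs, Real.norm_eq_abs]
        exact hd.le.trans (le_abs_self _)
      · simp [hχK x hx]
    have hle : eLpNorm (fun x => (v i x - v₀ x) * χ x) 2 volume
        ≤ eLpNorm (fun x => (ε / (M + 1)) * χ x) 2 volume := eLpNorm_mono hb2
    have heq : eLpNorm (fun x => (ε / (M + 1)) * χ x) 2 volume
        = (‖ε / (M + 1)‖₊ : ENNReal) * eLpNorm χ 2 volume := by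
      have := eLpNorm_const_smul (μ := (volume : Measure (Fin n → ℝ))) (ε / (M + 1)) χ 2
      rw [enorm_eq_nnnorm] at this
      exact this
    have hfin : (‖ε / (M + 1)‖₊ : ENNReal) * eLpNorm χ 2 volume ≠ ⊤ :=
      ENNReal.mul_ne_top ENNReal.coe_ne_top hχ2.2.ne
    have hnorm_eq : ‖wL i‖ = (eLpNorm (fun x => (v i x - v₀ x) * χ x) 2 volume).toReal :=
      Lp.norm_toLp _ _
    have hbnd : ‖wL i‖ ≤ (ε / (M + 1)) * M := by
      rw [hnorm_eq]
      calc (eLpNorm (fun x => (v i x - v₀ x) * χ x) 2 volume).toReal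
          ≤ ((‖ε / (M + 1)‖₊ : ENNReal) * eLpNorm χ 2 volume).toReal :=
            ENNReal.toReal_mono hfin (hle.trans_eq heq)
        _ = (ε / (M + 1)) * M := by
            rw [ENNReal.toReal_mul, ENNReal.coe_toReal, coe_nnnorm, Real.norm_eq_abs,
              abs_of_pos hδ]
    rw [Real.dist_eq, sub_zero, abs_of_nonneg (norm_nonneg _)]
    calc ‖wL i‖ ≤ (ε / (M + 1)) * M := hbnd
      _ < ε := by
          rw [div_mul_eq_mul_div, div_lt_iff₀ (by linarith)]
          nlinarith
  have hbound : ∀ i, ‖∫ x, b i x * ((v i x - v₀ x) * χ x)‖ ≤ C' * ‖wL i‖ := by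
    intro i
    rw [hpair i, Real.norm_eq_abs]
    calc |inner (𝕜 := ℝ) (fL i) (wL i)| ≤ ‖fL i‖ * ‖wL i‖ := abs_real_inner_le_norm _ _
      _ ≤ C' * ‖wL i‖ := by
          have := norm_nonneg (wL i)
          exact mul_le_mul_of_nonneg_right (hnorm i) this
  refine squeeze_zero_norm hbound ?_
  rw [show (0:ℝ) = C' * 0 by ring]
  exact hwL0.const_mul C'

lemma hasCompactSupport_finsetSum {ι : Type*} (s : Finset ι) (h : ι → (Fin n → ℝ) → ℝ)
    (hh : ∀ a ∈ s, HasCompactSupport (h a)) :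
    HasCompactSupport (fun x => ∑ a ∈ s, h a x) := by
  classical
  induction s using Finset.induction with
  | empty => exact HasCompactSupport.intro isCompact_empty (fun x _ => by simp)
  | @insert a s hnotmem ih =>
      simp_rw [Finset.sum_insert hnotmem]
      exact (hh _ (Finset.mem_insert_self a s)).add
        (ih fun b hb => hh b (Finset.mem_insert_of_mem hb))

lemma hasCompactSupport_box {g : Matrix (Fin n) (Fin n) ℝ} {χ : (Fin n → ℝ) → ℝ}
    (hχc : HasCompactSupport χ) : HasCompactSupport (Box g χ) := by
  unfold Box
  refine hasCompactSupport_finsetSum _ _ fun α _ => hasCompactSupport_finsetSum _ _ fun β _ => ?_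
  exact ((hasCompactSupport_pd (hasCompactSupport_pd hχc β) α).mul_left)

lemma tendsto_integral_of_locallyUniform2 {F G : ℕ → (Fin n → ℝ) → ℝ}
    {F₀ G₀ : (Fin n → ℝ) → ℝ} {χ : (Fin n → ℝ) → ℝ}
    (hF : ∀ i, Continuous (F i)) (hF₀ : Continuous F₀)
    (hG : ∀ i, Continuous (G i)) (hG₀ : Continuous G₀)
    (hχ : Continuous χ) (hχc : HasCompactSupport χ)
    (hFu : TendstoLocallyUniformly F F₀ atTop) (hGu : TendstoLocallyUniformly G G₀ atTop) :
    Tendsto (fun i => ∫ x, (F i x * G i x) * χ x) atTop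
      (nhds (∫ x, (F₀ x * G₀ x) * χ x)) := by
  set K := tsupport χ with hK
  have hKc : IsCompact K := hχc
  have hKm : MeasurableSet K := hKc.isClosed.measurableSet
  have hrw : ∀ (H : (Fin n → ℝ) → ℝ), ∫ x, H x * χ x = ∫ x in K, H x * χ x := by
    intro H
    refine (setIntegral_eq_integral_of_forall_compl_eq_zero fun x hx => ?_).symm
    rw [image_eq_zero_of_notMem_tsupport hx, mul_zero]
  simp_rw [hrw]
  have hUF : TendstoUniformlyOn F F₀ atTop K :=
    (tendstoLocallyUniformly_iff_forall_isCompact.1 hFu) K hKc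
  have hUG : TendstoUniformlyOn G G₀ atTop K :=
    (tendstoLocallyUniformly_iff_forall_isCompact.1 hGu) K hKc
  refine tendsto_integral_filter_of_dominated_convergence
    (bound := fun x => ((|F₀ x| + 1) * (|G₀ x| + 1)) * |χ x|) ?_ ?_ ?_ ?_
  · exact Eventually.of_forall fun i =>
      (((hF i).mul (hG i)).mul hχ).aestronglyMeasurable.restrict
  · filter_upwards [Metric.tendstoUniformlyOn_iff.1 hUF 1 one_pos,
      Metric.tendstoUniformlyOn_iff.1 hUG 1 one_pos] with i hiF hiG
    refine ae_restrict_of_forall_mem hKm fun x hx => ?_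
    have h1 : |F i x| ≤ |F₀ x| + 1 := by
      have := hiF x hx; rw [Real.dist_eq, abs_sub_comm] at this
      have h := abs_sub_abs_le_abs_sub (F i x) (F₀ x); linarith
    have h2 : |G i x| ≤ |G₀ x| + 1 := by
      have := hiG x hx; rw [Real.dist_eq, abs_sub_comm] at this
      have h := abs_sub_abs_le_abs_sub (G i x) (G₀ x); linarith
    rw [norm_mul, norm_mul]
    refine mul_le_mul_of_nonneg_right ?_ (abs_nonneg _)
    rw [Real.norm_eq_abs, Real.norm_eq_abs]
    have hF0 : (0:ℝ) ≤ |F₀ x| + 1 := by positivity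
    exact mul_le_mul h1 h2 (abs_nonneg _) hF0
  · exact ((((hF₀.abs.add continuous_const).mul (hG₀.abs.add continuous_const)).mul
      hχ.abs).locallyIntegrable).integrableOn_isCompact hKc
  · refine ae_restrict_of_forall_mem hKm fun x _ => ?_
    exact (((hFu.tendstoLocallyUniformlyOn.tendsto_at (Set.mem_univ x)).mul
      (hGu.tendstoLocallyUniformlyOn.tendsto_at (Set.mem_univ x))).mul tendsto_const_nhds)

/-- Compensated compactness for the null form `Q_0`: if `φ_i → φ₀`, `ψ_i → ψ₀` locally
uniformly, the first derivatives converge weakly in `L²_loc`, and `□φ_i ⇀ □φ₀`,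
`□ψ_i ⇀ □ψ₀` weakly in `L²_loc`, then `Q_0(φ_i, ψ_i) → Q_0(φ₀, ψ₀)` in distributions. -/
theorem stmt4 {d : ℕ} (g : Matrix (Fin (d + 1)) (Fin (d + 1)) ℝ) (hg : g.IsSymm)
    (φ ψ : ℕ → (Fin (d + 1) → ℝ) → ℝ) (φ₀ ψ₀ : (Fin (d + 1) → ℝ) → ℝ)
    (hφsm : ∀ i, ContDiff ℝ (⊤ : ℕ∞) (φ i)) (hψsm : ∀ i, ContDiff ℝ (⊤ : ℕ∞) (ψ i))
    (hφ₀sm : ContDiff ℝ (⊤ : ℕ∞) φ₀) (hψ₀sm : ContDiff ℝ (⊤ : ℕ∞) ψ₀)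
    (hφu : TendstoLocallyUniformly φ φ₀ atTop)
    (hψu : TendstoLocallyUniformly ψ ψ₀ atTop)
    (hφw : ∀ α : Fin (d + 1), ∀ w : (Fin (d + 1) → ℝ) → ℝ, HasCompactSupport w →
      MemLp w 2 volume →
      Tendsto (fun i => ∫ x, pd α (φ i) x * w x) atTop (nhds (∫ x, pd α φ₀ x * w x)))
    (hψw : ∀ α : Fin (d + 1), ∀ w : (Fin (d + 1) → ℝ) → ℝ, HasCompactSupport w →
      MemLp w 2 volume →
      Tendsto (fun i => ∫ x, pd α (ψ i) x * w x) atTop (nhds (∫ x, pd α ψ₀ x * w x)))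
    (hφbox : ∀ w : (Fin (d + 1) → ℝ) → ℝ, HasCompactSupport w → MemLp w 2 volume →
      Tendsto (fun i => ∫ x, Box g (φ i) x * w x) atTop (nhds (∫ x, Box g φ₀ x * w x)))
    (hψbox : ∀ w : (Fin (d + 1) → ℝ) → ℝ, HasCompactSupport w → MemLp w 2 volume →
      Tendsto (fun i => ∫ x, Box g (ψ i) x * w x) atTop (nhds (∫ x, Box g ψ₀ x * w x))) :
    ∀ χ : (Fin (d + 1) → ℝ) → ℝ, ContDiff ℝ (⊤ : ℕ∞) χ → HasCompactSupport χ →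
      Tendsto (fun i => ∫ x, (∑ α, ∑ β, g α β * pd α (φ i) x * pd β (ψ i) x) * χ x)
        atTop (nhds (∫ x, (∑ α, ∑ β, g α β * pd α φ₀ x * pd β ψ₀ x) * χ x)) := by
  intro χ hχsm hχc
  have key : ∀ i, ∫ x, (∑ α, ∑ β, g α β * pd α (φ i) x * pd β (ψ i) x) * χ x
      = ((∫ x, (φ i x * ψ i x) * Box g χ x) - (∫ x, Box g (φ i) x * (ψ i x * χ x))
          - (∫ x, Box g (ψ i) x * (φ i x * χ x))) / 2 :=
    fun i => main_id hg (hφsm i) (hψsm i) hχsm hχc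
  simp_rw [key, main_id hg hφ₀sm hψ₀sm hχsm hχc]
  have T1 : Tendsto (fun i => ∫ x, (φ i x * ψ i x) * Box g χ x) atTop
      (nhds (∫ x, (φ₀ x * ψ₀ x) * Box g χ x)) :=
    tendsto_integral_of_locallyUniform2 (fun i => (hφsm i).continuous) hφ₀sm.continuous
      (fun i => (hψsm i).continuous) hψ₀sm.continuous (box_continuous hχsm)
      (hasCompactSupport_box hχc) hφu hψu
  have T2 : Tendsto (fun i => ∫ x, Box g (φ i) x * (ψ i x * χ x)) atTop
      (nhds (∫ x, Box g φ₀ x * (ψ₀ x * χ x))) :=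
    weak_strong_pairing (fun i => box_continuous (hφsm i)) hφbox
      (fun i => (hψsm i).continuous) hψ₀sm.continuous hψu hχsm.continuous hχc
  have T3 : Tendsto (fun i => ∫ x, Box g (ψ i) x * (φ i x * χ x)) atTop
      (nhds (∫ x, Box g ψ₀ x * (φ₀ x * χ x))) :=
    weak_strong_pairing (fun i => box_continuous (hψsm i)) hψbox
      (fun i => (hφsm i).continuous) hφ₀sm.continuous hφu hχsm.continuous hχc
  exact ((T1.sub T2).sub T3).div_const 2
end

section
/- Null dust as a special case of measure-valued massless Vlasov: let g be a Lorentzian metric on an open set M ⊂ ℝ³, u : M → ℝ smooth with g⁻¹(du,du) = 0 and du ≠ 0, and F : M → ℝ smooth satisfying 2 g^{αβ} ∂_α u ∂_β F + (□_g u) F = 0. Define the measure ν on M × (ℝ³ ∖ {0})/∼ (covectors up to positive scale) as the pushforward of F² dVol_g under x ↦ (x, [du(x)]). Then for every C¹ function ã(x,ξ) positively homogeneous of degree 1 in ξ and compactly supported in x, ∫ { g^{αβ} ξ_α ξ_β , ã } dν = 0, where {f,h} = ∂_{ξ_α} f ∂_{x^α} h − ∂_{ξ_α} h ∂_{x^α}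 f is the Poisson bracket. -/
open MeasureTheory

/-- The geometric wave operator `□_g u = (dvol)⁻¹ ∂_α (dvol g^{αβ} ∂_β u)` in local
coordinates, with inverse metric `ginv` and volume density `dvol`. -/
noncomputable def Boxg {n : ℕ} (ginv : (Fin n → ℝ) → Matrix (Fin n) (Fin n) ℝ)
    (dvol : (Fin n → ℝ) → ℝ) (u : (Fin n → ℝ) → ℝ) : (Fin n → ℝ) → ℝ :=
  fun x => (dvol x)⁻¹ * ∑ α, pd α (fun y => dvol y * ∑ β, ginv y α β * pd β u y) x

namespace NullDustAux

lemma pd_eq_of_hasFDerivAt {α : Fin 3} {f : (Fin 3 → ℝ) → ℝ} {x : Fin 3 → ℝ}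
    {L : (Fin 3 → ℝ) →L[ℝ] ℝ} (h : HasFDerivAt f L x) : pd α f x = L (Pi.single α 1) := by
  unfold pd; rw [h.fderiv]

lemma pd_congr_nhds {α : Fin 3} {f g : (Fin 3 → ℝ) → ℝ} {x : Fin 3 → ℝ}
    (h : f =ᶠ[nhds x] g) : pd α f x = pd α g x := by
  unfold pd; rw [h.fderiv_eq]

lemma pd_zero_of_eventually {α : Fin 3} {f : (Fin 3 → ℝ) → ℝ} {x : Fin 3 → ℝ}
    (h : ∀ᶠ y in nhds x, f y = 0) : pd α f x = 0 := by
  have : pd α f x = pd α (fun _ => (0:ℝ)) x := pd_congr_nhds (by filter_upwards [h] with y hy; simp [hy])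
  rw [this]; simp [pd]

lemma pd_mul {α : Fin 3} {f g : (Fin 3 → ℝ) → ℝ} {x : Fin 3 → ℝ}
    (hf : DifferentiableAt ℝ f x) (hg : DifferentiableAt ℝ g x) :
    pd α (fun y => f y * g y) x = pd α f x * g x + f x * pd α g x := by
  unfold pd
  rw [fderiv_fun_mul hf hg]
  simp [smul_eq_mul]; ring

lemma pd_sum {α : Fin 3} {ι : Type*} (s : Finset ι) {f : ι → (Fin 3 → ℝ) → ℝ} {x : Fin 3 → ℝ}
    (hf : ∀ i ∈ s, DifferentiableAt ℝ (f i) x) :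
    pd α (fun y => ∑ i ∈ s, f i y) x = ∑ i ∈ s, pd α (f i) x := by
  have h := HasFDerivAt.fun_sum (fun i hi => (hf i hi).hasFDerivAt)
  rw [pd_eq_of_hasFDerivAt h]
  simp [pd]

lemma pd_sq {α : Fin 3} {f : (Fin 3 → ℝ) → ℝ} {x : Fin 3 → ℝ}
    (hf : DifferentiableAt ℝ f x) :
    pd α (fun y => f y ^ 2) x = 2 * f x * pd α f x := by
  have e : (fun y => f y ^ 2) = fun y => f y * f y := by funext y; ring
  rw [e, pd_mul hf hf]; ring

lemma pd_const_mul {α : Fin 3} (c : ℝ) {f : (Fin 3 → ℝ) → ℝ} {x : Fin 3 → ℝ}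
    (hf : DifferentiableAt ℝ f x) :
    pd α (fun y => c * f y) x = c * pd α f x := by
  rw [pd_mul (differentiableAt_const c) hf]
  simp [pd]

lemma contDiff_pd (α : Fin 3) {u : (Fin 3 → ℝ) → ℝ} (hu : ContDiff ℝ (⊤ : ℕ∞) u) :
    ContDiff ℝ (⊤ : ℕ∞) (pd α u) :=
  (hu.fderiv_right (by simp)).clm_apply contDiff_const

lemma pd_pd_eq_snd_deriv {u : (Fin 3 → ℝ) → ℝ} (hu : ContDiff ℝ (⊤ : ℕ∞) u) (γ δ : Fin 3) (x : Fin 3 → ℝ) :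
    pd γ (pd δ u) x = fderiv ℝ (fderiv ℝ u) x (Pi.single γ 1) (Pi.single δ 1) := by
  have h2 : HasFDerivAt (fderiv ℝ u) (fderiv ℝ (fderiv ℝ u) x) x :=
    (((hu.fderiv_right (m := 1) (WithTop.coe_le_coe.2 le_top)).differentiable one_ne_zero) x).hasFDerivAt
  have h3 : HasFDerivAt (fun y => fderiv ℝ u y (Pi.single δ 1))
      ((fderiv ℝ u x).comp 0 + (fderiv ℝ (fderiv ℝ u) x).flip (Pi.single δ 1)) x :=
    h2.clm_apply (hasFDerivAt_const (Pi.single δ 1 : Fin 3 → ℝ) x)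
  have : pd γ (pd δ u) x = pd γ (fun y => fderiv ℝ u y (Pi.single δ 1)) x := rfl
  rw [this, pd_eq_of_hasFDerivAt h3]
  simp

lemma pd_pd_comm {u : (Fin 3 → ℝ) → ℝ} (hu : ContDiff ℝ (⊤ : ℕ∞) u) (γ δ : Fin 3) (x : Fin 3 → ℝ) :
    pd γ (pd δ u) x = pd δ (pd γ u) x := by
  rw [pd_pd_eq_snd_deriv hu, pd_pd_eq_snd_deriv hu]
  exact second_derivative_symmetric
    (fun y => ((hu.differentiable (by simp)) y).hasFDerivAt)
    ((((hu.fderiv_right (m := 1) (WithTop.coe_le_coe.2 le_top)).differentiable one_ne_zero) x).hasFDerivAt) _ _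

end NullDustAux

/-- Null dust as a special case of measure-valued massless Vlasov: if `u` solves the
eikonal equation with `du ≠ 0` and `F` the null-dust transport equation, then the
measure `ν` given by pushing forward `F² dVol_g` under `x ↦ (x, du(x))` satisfies the
weak massless Vlasov transport equation `∫ {g^{αβ} ξ_α ξ_β, ã} dν = 0` for every `C¹`
symbol `ã(x,ξ)` positively homogeneous of degree 1 in `ξ` and compactly supported in
`x`. The integral below is the pushforward integral, written over `x ∈ M` with
`ξ = du(x)`, and the Poisson bracket is expanded in coordinates. -/
theorem stmt17 (M : Set (Fin 3 → ℝ)) (hM : IsOpen M)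
    (gmat : (Fin 3 → ℝ) → Matrix (Fin 3) (Fin 3) ℝ)
    (hgsm : ∀ μ ν, ContDiff ℝ (⊤ : ℕ∞) fun x => gmat x μ ν)
    (hgsymm : ∀ x, (gmat x).IsSymm)
    (ginv : (Fin 3 → ℝ) → Matrix (Fin 3) (Fin 3) ℝ)
    (hginv : ∀ x ∈ M, ginv x = (gmat x)⁻¹)
    (hginvsm : ∀ μ ν, ContDiff ℝ (⊤ : ℕ∞) fun x => ginv x μ ν)
    (dvol : (Fin 3 → ℝ) → ℝ)
    (hdvol : ∀ x ∈ M, dvol x = Real.sqrt |(gmat x).det|)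
    (u F : (Fin 3 → ℝ) → ℝ) (hu : ContDiff ℝ (⊤ : ℕ∞) u) (hF : ContDiff ℝ (⊤ : ℕ∞) F)
    (hdu : ∀ x ∈ M, (fun α => pd α u x) ≠ 0)
    (heik : ∀ x ∈ M, ∑ α, ∑ β, ginv x α β * pd α u x * pd β u x = 0)
    (htrans : ∀ x ∈ M,
      2 * (∑ α, ∑ β, ginv x α β * pd α u x * pd β F x) + Boxg ginv dvol u x * F x = 0)
    (A : ((Fin 3 → ℝ) × (Fin 3 → ℝ)) → ℝ) (hA : ContDiff ℝ 1 A)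
    (hhom : ∀ x ξ : Fin 3 → ℝ, ∀ c : ℝ, 0 < c → A (x, c • ξ) = c * A (x, ξ))
    (hAsupp : ∃ K : Set (Fin 3 → ℝ), IsCompact K ∧ K ⊆ M ∧
      ∀ p : (Fin 3 → ℝ) × (Fin 3 → ℝ), p.1 ∉ K → A p = 0) :
    ∫ x in M,
      ((∑ α, (2 * ∑ β, ginv x α β * pd β u x) *
          fderiv ℝ A (x, fun γ => pd γ u x) (Pi.single α 1, 0))
        - ∑ α, (fderiv ℝ A (x, fun γ => pd γ u x) (0, Pi.single α 1)) *
            (∑ β, ∑ γ, pd α (fun y => ginv y β γ) x * pd β u x * pd γ u x))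
        * (F x) ^ 2 * dvol x = 0 := by
  classical
  obtain ⟨K, hKc, hKM, hA0⟩ := hAsupp
  -- abbreviations
  set Du : (Fin 3 → ℝ) → (Fin 3 → ℝ) := fun x γ => pd γ u x with hDudef
  set aa : (Fin 3 → ℝ) → ℝ := fun x => A (x, Du x) with haadef
  set S : Fin 3 → (Fin 3 → ℝ) → ℝ := fun α x => ∑ β, ginv x α β * pd β u x with hSdef
  set cc : Fin 3 → (Fin 3 → ℝ) → ℝ := fun α x => 2 * dvol x * S α x * F x ^ 2 with hccdef
  set V : Fin 3 → (Fin 3 → ℝ) → ℝ := fun α x => cc α x * aa x with hVdef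
  -- smoothness
  have hpdu : ∀ γ, ContDiff ℝ (⊤ : ℕ∞) (pd γ u) := fun γ => NullDustAux.contDiff_pd γ hu
  have hpdF : ∀ γ, ContDiff ℝ (⊤ : ℕ∞) (pd γ F) := fun γ => NullDustAux.contDiff_pd γ hF
  have hDusm : ContDiff ℝ (⊤ : ℕ∞) Du := contDiff_pi.2 hpdu
  have haC1 : ContDiff ℝ 1 aa := hA.comp (contDiff_id.prodMk (hDusm.of_le (by simp)))
  have hSsm : ∀ α, ContDiff ℝ (⊤ : ℕ∞) (S α) :=
    fun α => ContDiff.sum fun β _ => (hginvsm α β).mul (hpdu β)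
  -- the U/Z decomposition
  set φ : (Fin 3 → ℝ) → ℝ := fun x => (gmat x).det * (ginv x).det with hφdef
  have hdet_sm : ContDiff ℝ (⊤ : ℕ∞) (fun x => (gmat x).det) := by
    have h3 : (fun x => (gmat x).det) = fun x =>
        gmat x 0 0 * gmat x 1 1 * gmat x 2 2 - gmat x 0 0 * gmat x 1 2 * gmat x 2 1 -
        gmat x 0 1 * gmat x 1 0 * gmat x 2 2 + gmat x 0 1 * gmat x 1 2 * gmat x 2 0 +
        gmat x 0 2 * gmat x 1 0 * gmat x 2 1 - gmat x 0 2 * gmat x 1 1 * gmat x 2 0 :=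
      funext fun x => Matrix.det_fin_three (gmat x)
    rw [h3]
    repeat' first
      | exact hgsm _ _
      | apply ContDiff.sub
      | apply ContDiff.add
      | apply ContDiff.mul
  have hdetinv_sm : ContDiff ℝ (⊤ : ℕ∞) (fun x => (ginv x).det) := by
    have h3 : (fun x => (ginv x).det) = fun x =>
        ginv x 0 0 * ginv x 1 1 * ginv x 2 2 - ginv x 0 0 * ginv x 1 2 * ginv x 2 1 -
        ginv x 0 1 * ginv x 1 0 * ginv x 2 2 + ginv x 0 1 * ginv x 1 2 * ginv x 2 0 +
        ginv x 0 2 * ginv x 1 0 * ginv x 2 1 - ginv x 0 2 * ginv x 1 1 * ginv x 2 0 :=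
      funext fun x => Matrix.det_fin_three (ginv x)
    rw [h3]
    repeat' first
      | exact hginvsm _ _
      | apply ContDiff.sub
      | apply ContDiff.add
      | apply ContDiff.mul
  have hφcont : Continuous φ := (hdet_sm.mul hdetinv_sm).continuous
  set U : Set (Fin 3 → ℝ) := M ∩ φ ⁻¹' Set.Ioi (1/2 : ℝ) with hUdef
  set Z : Set (Fin 3 → ℝ) := M ∩ φ ⁻¹' Set.Iio (1/2 : ℝ) with hZdef
  have hUopen : IsOpen U := hM.inter (isOpen_Ioi.preimage hφcont)
  have hZopen : IsOpen Z := hM.inter (isOpen_Iio.preimage hφcont)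
  have hφval : ∀ x ∈ M, ((gmat x).det = 0 ∧ φ x = 0) ∨ ((gmat x).det ≠ 0 ∧ φ x = 1) := by
    intro x hx
    have hdi : (ginv x).det = Ring.inverse (gmat x).det := by
      rw [hginv x hx]; exact Matrix.det_nonsing_inv _
    by_cases hd : (gmat x).det = 0
    · left
      refine ⟨hd, ?_⟩
      simp [hφdef, hd]
    · right
      refine ⟨hd, ?_⟩
      simp only [hφdef, hdi, Ring.inverse_eq_inv']
      field_simp
  have hMcases : ∀ x ∈ M, x ∈ U ∨ x ∈ Z := by
    intro x hx
    rcases hφval x hx with ⟨_, h⟩ | ⟨_, h⟩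
    · right; refine ⟨hx, ?_⟩; simp only [Set.mem_preimage, Set.mem_Iio, h]; norm_num
    · left; refine ⟨hx, ?_⟩; simp only [Set.mem_preimage, Set.mem_Ioi, h]; norm_num
  have hUdet : ∀ x ∈ U, (gmat x).det ≠ 0 := by
    intro x hx
    rcases hφval x hx.1 with ⟨_, h⟩ | ⟨hd, _⟩
    · exfalso
      have := hx.2
      simp only [Set.mem_preimage, Set.mem_Ioi, h] at this
      norm_num at this
    · exact hd
  have hZdet : ∀ x ∈ Z, (gmat x).det = 0 := by
    intro x hx
    rcases hφval x hx.1 with ⟨hd, _⟩ | ⟨_, h⟩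
    · exact hd
    · exfalso
      have := hx.2
      simp only [Set.mem_preimage, Set.mem_Iio, h] at this
      norm_num at this
  have hdvolZ : ∀ x ∈ Z, dvol x = 0 := by
    intro x hx
    rw [hdvol x hx.1, hZdet x hx]
    simp
  have hdvolU : ∀ x ∈ U, ContDiffAt ℝ (⊤ : ℕ∞) dvol x := by
    intro x hx
    have hev : dvol =ᶠ[nhds x] fun y => Real.sqrt (Real.sqrt ((gmat y).det ^ 2)) := by
      filter_upwards [hM.mem_nhds hx.1] with y hy
      rw [hdvol y hy, Real.sqrt_sq_eq_abs]
    have h1 : ContDiffAt ℝ (⊤ : ℕ∞) (fun y => (gmat y).det ^ 2) x := (hdet_sm.pow 2).contDiffAt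
    have h2 : ContDiffAt ℝ (⊤ : ℕ∞) Real.sqrt ((gmat x).det ^ 2) :=
      Real.contDiffAt_sqrt (pow_ne_zero 2 (hUdet x hx))
    have h3 : ContDiffAt ℝ (⊤ : ℕ∞) (fun y => Real.sqrt ((gmat y).det ^ 2)) x := h2.comp x h1
    have h4 : ContDiffAt ℝ (⊤ : ℕ∞) Real.sqrt (Real.sqrt ((gmat x).det ^ 2)) := by
      apply Real.contDiffAt_sqrt
      rw [Real.sqrt_ne_zero']
      exact (sq_nonneg _).lt_of_ne' (pow_ne_zero 2 (hUdet x hx))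
    exact (h4.comp x h3).congr_of_eventuallyEq hev
  have hdvolUne : ∀ x ∈ U, dvol x ≠ 0 := by
    intro x hx
    rw [hdvol x hx.1]
    have : 0 < |(gmat x).det| := abs_pos.2 (hUdet x hx)
    positivity
  -- support facts
  have haK : ∀ x, x ∉ K → aa x = 0 := fun x hx => hA0 (x, Du x) hx
  have hVK : ∀ α x, x ∉ K → V α x = 0 := by
    intro α x hx; simp [hVdef, haK x hx]
  have hVZ : ∀ α, ∀ x ∈ Z, V α x = 0 := by
    intro α x hx; simp [hVdef, hccdef, hdvolZ x hx]
  -- C¹ regularity of V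
  have hKcopen : IsOpen Kᶜ := hKc.isClosed.isOpen_compl
  have hVC1 : ∀ α, ContDiff ℝ 1 (V α) := by
    intro α
    rw [contDiff_iff_contDiffAt]
    intro x
    by_cases hxM : x ∈ M
    · rcases hMcases x hxM with hxU | hxZ
      · have h1 : ContDiffAt ℝ 1 dvol x := (hdvolU x hxU).of_le (by simp)
        have hc : ContDiffAt ℝ 1 (cc α) x :=
          ((contDiffAt_const.mul h1).mul ((hSsm α).contDiffAt.of_le (by simp))).mul
            ((hF.contDiffAt.of_le (by simp)).pow 2)
        exact hc.mul haC1.contDiffAt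
      · apply ContDiffAt.congr_of_eventuallyEq (contDiffAt_const (c := (0:ℝ)))
        filter_upwards [hZopen.mem_nhds hxZ] with y hy
        exact hVZ α y hy
    · have hxK : x ∉ K := fun h => hxM (hKM h)
      apply ContDiffAt.congr_of_eventuallyEq (contDiffAt_const (c := (0:ℝ)))
      filter_upwards [hKcopen.mem_nhds hxK] with y hy
      exact hVK α y hy
  -- pointwise key identity
  have hkey : ∀ x ∈ M,
      ((∑ α, (2 * ∑ β, ginv x α β * pd β u x) *
          fderiv ℝ A (x, fun γ => pd γ u x) (Pi.single α 1, 0))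
        - ∑ α, (fderiv ℝ A (x, fun γ => pd γ u x) (0, Pi.single α 1)) *
            (∑ β, ∑ γ, pd α (fun y => ginv y β γ) x * pd β u x * pd γ u x))
        * (F x) ^ 2 * dvol x = ∑ α, pd α (V α) x := by
    intro x hxM
    have hdiffpdu : ∀ γ, DifferentiableAt ℝ (pd γ u) x :=
      fun γ => ((hpdu γ).differentiable (by simp)) x
    have hdiffginv : ∀ β γ, DifferentiableAt ℝ (fun y => ginv y β γ) x :=
      fun β γ => ((hginvsm β γ).differentiable (by simp)) x
    have hsymm : ∀ p q, ginv x p q = ginv x q p := by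
      have hg' : Matrix.transpose (gmat x) = gmat x := hgsymm x
      have hsy : Matrix.transpose (ginv x) = ginv x := by
        rw [hginv x hxM, Matrix.transpose_nonsing_inv, hg']
      intro p q
      conv_lhs => rw [← hsy]
      rw [Matrix.transpose_apply]
    rcases hMcases x hxM with hxU | hxZ
    swap
    · have hz : ∀ α, pd α (V α) x = 0 := by
        intro α
        apply NullDustAux.pd_zero_of_eventually
        filter_upwards [hZopen.mem_nhds hxZ] with y hy
        exact hVZ α y hy
      rw [Finset.sum_eq_zero fun α _ => hz α, hdvolZ x hxZ, mul_zero]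
    · -- the main case : x ∈ U
      have hdiffdvol : DifferentiableAt ℝ dvol x := (hdvolU x hxU).differentiableAt (by simp)
      have hdiffS : ∀ α, DifferentiableAt ℝ (S α) x := fun α => ((hSsm α).differentiable (by simp)) x
      have hdiffF : DifferentiableAt ℝ F x := (hF.differentiable (by simp)) x
      have hdiffaa : DifferentiableAt ℝ aa x := (haC1.differentiable one_ne_zero) x
      have hdiffcc : ∀ α, DifferentiableAt ℝ (cc α) x := fun α =>
        ((hdiffdvol.const_mul 2).mul (hdiffS α)).mul (hdiffF.pow 2)
      have step1 : ∀ α, pd α (V α) x = pd α (cc α) x * aa x + cc α x * pd α aa x :=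
        fun α => NullDustAux.pd_mul (hdiffcc α) hdiffaa
      -- Claim A : the divergence of the current vanishes
      have hBox : ∑ α, pd α (fun y => dvol y * ∑ β, ginv y α β * pd β u y) x
          = dvol x * Boxg ginv dvol u x := by
        show _ = dvol x * ((dvol x)⁻¹ * ∑ α, pd α (fun y => dvol y * ∑ β, ginv y α β * pd β u y) x)
        rw [← mul_assoc, mul_inv_cancel₀ (hdvolUne x hxU), one_mul]
      have hccpd : ∀ α, pd α (cc α) x =
          pd α (fun y => dvol y * ∑ β, ginv y α β * pd β u y) x * (2 * F x ^ 2)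
            + (dvol x * ∑ β, ginv x α β * pd β u x) * (4 * F x * pd α F x) := by
        intro α
        have e1 : cc α = fun y => (dvol y * ∑ β, ginv y α β * pd β u y) * (2 * F y ^ 2) := by
          funext y; simp only [hccdef, hSdef]; ring
        rw [e1, NullDustAux.pd_mul (hdiffdvol.fun_mul (hdiffS α)) ((hdiffF.fun_pow 2).const_mul 2),
          NullDustAux.pd_const_mul 2 (hdiffF.fun_pow 2), NullDustAux.pd_sq hdiffF]
        ring
      have hT : (∑ α, S α x * pd α F x) = ∑ α, ∑ β, ginv x α β * pd α u x * pd β F x := by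
        have h1 : (∑ α, S α x * pd α F x) = ∑ α, ∑ β, ginv x α β * pd β u x * pd α F x := by
          refine Finset.sum_congr rfl fun α _ => ?_
          simp only [hSdef]
          rw [Finset.sum_mul]
        rw [h1, Finset.sum_comm]
        exact Finset.sum_congr rfl fun α _ => Finset.sum_congr rfl fun β _ => by
          rw [hsymm β α]
      have hclaimA : ∑ α, pd α (cc α) x = 0 := by
        rw [Finset.sum_congr rfl fun α _ => hccpd α, Finset.sum_add_distrib, ← Finset.sum_mul,
          hBox]
        have h2 : ∑ α, (dvol x * ∑ β, ginv x α β * pd β u x) * (4 * F x * pd α F x)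
            = (4 * F x * dvol x) * ∑ α, ∑ β, ginv x α β * pd α u x * pd β F x := by
          rw [← hT, Finset.mul_sum]
          refine Finset.sum_congr rfl fun α _ => ?_
          simp only [hSdef]
          ring
        rw [h2]
        linear_combination (2 * F x * dvol x) * htrans x hxM
      -- chain rule for aa
      have hpda : ∀ α, pd α aa x = fderiv ℝ A (x, fun γ => pd γ u x) (Pi.single α 1, 0)
          + ∑ γ, pd α (pd γ u) x * fderiv ℝ A (x, fun γ => pd γ u x) (0, Pi.single γ 1) := by
        intro α
        have hDuD : HasFDerivAt Du
            (ContinuousLinearMap.pi (fun γ => fderiv ℝ (pd γ u) x)) x :=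
          hasFDerivAt_pi.2 (fun γ => (hdiffpdu γ).hasFDerivAt)
        have hG : HasFDerivAt (fun y => (y, Du y))
            ((ContinuousLinearMap.id ℝ (Fin 3 → ℝ)).prod
              (ContinuousLinearMap.pi (fun γ => fderiv ℝ (pd γ u) x))) x :=
          (hasFDerivAt_id x).prodMk hDuD
        have hAd : HasFDerivAt A (fderiv ℝ A (x, Du x)) (x, Du x) :=
          ((hA.differentiable one_ne_zero) (x, Du x)).hasFDerivAt
        have hcomp : HasFDerivAt aa ((fderiv ℝ A (x, Du x)).comp
            ((ContinuousLinearMap.id ℝ (Fin 3 → ℝ)).prod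
              (ContinuousLinearMap.pi (fun γ => fderiv ℝ (pd γ u) x)))) x := hAd.comp x hG
        rw [NullDustAux.pd_eq_of_hasFDerivAt hcomp, ContinuousLinearMap.comp_apply]
        have hGe : ((ContinuousLinearMap.id ℝ (Fin 3 → ℝ)).prod
            (ContinuousLinearMap.pi (fun γ => fderiv ℝ (pd γ u) x))) (Pi.single α 1)
            = ((Pi.single α 1 : Fin 3 → ℝ), (fun γ => pd α (pd γ u) x : Fin 3 → ℝ)) := by
          refine Prod.ext ?_ ?_
          · simp
          · funext γ
            simp [pd, ContinuousLinearMap.prod_apply]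
        rw [hGe]
        have hsplit : ((Pi.single α 1 : Fin 3 → ℝ), (fun γ => pd α (pd γ u) x : Fin 3 → ℝ))
            = ((Pi.single α 1 : Fin 3 → ℝ), (0 : Fin 3 → ℝ))
              + ((0 : Fin 3 → ℝ), (fun γ => pd α (pd γ u) x : Fin 3 → ℝ)) := by
          refine Prod.ext ?_ ?_ <;> simp
        rw [hsplit, map_add]
        have hDux : Du x = fun γ => pd γ u x := rfl
        rw [hDux]
        congr 1
        have hw : ((0 : Fin 3 → ℝ), (fun γ => pd α (pd γ u) x : Fin 3 → ℝ))
            = ∑ γ, (pd α (pd γ u) x) • ((0 : Fin 3 → ℝ), (Pi.single γ 1 : Fin 3 → ℝ)) := by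
          refine Prod.ext ?_ ?_
          · rw [Prod.fst_sum]
            simp
          · rw [Prod.snd_sum]
            simp only [Prod.smul_snd]
            funext δ
            rw [Finset.sum_apply]
            simp [Pi.single_apply]
        rw [hw, map_sum]
        refine Finset.sum_congr rfl fun γ _ => ?_
        rw [ContinuousLinearMap.map_smul, smul_eq_mul]
      -- differentiated eikonal equation (claim B)
      have heik0 : ∀ γ, pd γ (fun y => ∑ β, ∑ δ, ginv y β δ * pd β u y * pd δ u y) x = 0 := by
        intro γ
        apply NullDustAux.pd_zero_of_eventually
        filter_upwards [hM.mem_nhds hxM] with y hy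
        exact heik y hy
      have hdiffprod : ∀ β δ, DifferentiableAt ℝ (fun y => ginv y β δ * pd β u y * pd δ u y) x :=
        fun β δ => ((hdiffginv β δ).mul (hdiffpdu β)).mul (hdiffpdu δ)
      have hdiffinner : ∀ β, DifferentiableAt ℝ (fun y => ∑ δ, ginv y β δ * pd β u y * pd δ u y) x :=
        fun β => DifferentiableAt.fun_sum (fun δ _ => hdiffprod β δ)
      have hexpand : ∀ γ, pd γ (fun y => ∑ β, ∑ δ, ginv y β δ * pd β u y * pd δ u y) x
          = (∑ β, ∑ δ, pd γ (fun y => ginv y β δ) x * pd β u x * pd δ u x)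
            + ((∑ β, ∑ δ, ginv x β δ * pd γ (pd β u) x * pd δ u x)
            + (∑ β, ∑ δ, ginv x β δ * pd β u x * pd γ (pd δ u) x)) := by
        intro γ
        have e : pd γ (fun y => ∑ β, ∑ δ, ginv y β δ * pd β u y * pd δ u y) x
            = ∑ β, ∑ δ, (pd γ (fun y => ginv y β δ) x * pd β u x * pd δ u x
              + (ginv x β δ * pd γ (pd β u) x * pd δ u x
                + ginv x β δ * pd β u x * pd γ (pd δ u) x)) := by
          rw [NullDustAux.pd_sum _ (fun β _ => hdiffinner β)]
          refine Finset.sum_congr rfl fun β _ => ?_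
          rw [NullDustAux.pd_sum _ (fun δ _ => hdiffprod β δ)]
          refine Finset.sum_congr rfl fun δ _ => ?_
          rw [NullDustAux.pd_mul ((hdiffginv β δ).fun_mul (hdiffpdu β)) (hdiffpdu δ),
            NullDustAux.pd_mul (hdiffginv β δ) (hdiffpdu β)]
          ring
        rw [e]
        simp only [Finset.sum_add_distrib]
      have hclaimB : ∀ γ, ∑ β, ∑ δ, pd γ (fun y => ginv y β δ) x * pd β u x * pd δ u x
          = - (2 * ∑ β, ∑ δ, ginv x β δ * pd γ (pd β u) x * pd δ u x) := by
        intro γ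
        have h0 := heik0 γ
        rw [hexpand γ] at h0
        have hCB : (∑ β, ∑ δ, ginv x β δ * pd β u x * pd γ (pd δ u) x)
            = ∑ β, ∑ δ, ginv x β δ * pd γ (pd β u) x * pd δ u x := by
          rw [Finset.sum_comm]
          exact Finset.sum_congr rfl fun β _ => Finset.sum_congr rfl fun δ _ => by
            rw [hsymm δ β]; ring
        rw [hCB] at h0
        linarith [h0]
      -- second derivative rearrangement
      have hstep5 : ∀ γ, ∑ α, S α x * pd α (pd γ u) x
          = ∑ β, ∑ δ, ginv x β δ * pd γ (pd β u) x * pd δ u x := by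
        intro γ
        refine Finset.sum_congr rfl fun β _ => ?_
        simp only [hSdef]
        rw [Finset.sum_mul]
        refine Finset.sum_congr rfl fun δ _ => ?_
        rw [NullDustAux.pd_pd_comm hu β γ]
        ring
      -- assembly
      have hR1 : ∑ α, pd α (V α) x = ∑ α, cc α x * pd α aa x := by
        rw [Finset.sum_congr rfl fun α _ => step1 α, Finset.sum_add_distrib, ← Finset.sum_mul,
          hclaimA, zero_mul, zero_add]
      have hR2 : ∑ α, cc α x * pd α aa x
          = (∑ α, cc α x * fderiv ℝ A (x, fun γ => pd γ u x) (Pi.single α 1, 0))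
            + ∑ γ, (∑ α, cc α x * pd α (pd γ u) x) *
                fderiv ℝ A (x, fun γ' => pd γ' u x) (0, Pi.single γ 1) := by
        have e : ∀ α, cc α x * pd α aa x
            = cc α x * fderiv ℝ A (x, fun γ => pd γ u x) (Pi.single α 1, 0)
              + ∑ γ, cc α x * (pd α (pd γ u) x *
                  fderiv ℝ A (x, fun γ' => pd γ' u x) (0, Pi.single γ 1)) := by
          intro α
          rw [hpda α, mul_add, Finset.mul_sum]
        rw [Finset.sum_congr rfl fun α _ => e α, Finset.sum_add_distrib]
        congr 1
        rw [Finset.sum_comm]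
        refine Finset.sum_congr rfl fun γ _ => ?_
        rw [Finset.sum_mul]
        refine Finset.sum_congr rfl fun α _ => ?_
        ring
      have hR4 : ∀ γ, ∑ α, cc α x * pd α (pd γ u) x
          = dvol x * F x ^ 2 *
              (- (∑ β, ∑ δ, pd γ (fun y => ginv y β δ) x * pd β u x * pd δ u x)) := by
        intro γ
        have hr3 : ∑ α, cc α x * pd α (pd γ u) x
            = dvol x * F x ^ 2 * (2 * ∑ α, S α x * pd α (pd γ u) x) := by
          have e1 : ∀ α, cc α x * pd α (pd γ u) x
              = dvol x * F x ^ 2 * (2 * (S α x * pd α (pd γ u) x)) := by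
            intro α
            simp only [hccdef]
            ring
          rw [Finset.sum_congr rfl fun α _ => e1 α]
          rw [show (2 * ∑ α, S α x * pd α (pd γ u) x)
              = ∑ α, 2 * (S α x * pd α (pd γ u) x) from Finset.mul_sum _ _ _]
          rw [← Finset.mul_sum]
        rw [hr3, hstep5 γ,
          show (2 * ∑ β, ∑ δ, ginv x β δ * pd γ (pd β u) x * pd δ u x)
            = - (∑ β, ∑ δ, pd γ (fun y => ginv y β δ) x * pd β u x * pd δ u x) from by
              linarith [hclaimB γ]]
      have hR5 : ∑ α, cc α x * fderiv ℝ A (x, fun γ => pd γ u x) (Pi.single α 1, 0)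
          = (∑ α, (2 * ∑ β, ginv x α β * pd β u x) *
              fderiv ℝ A (x, fun γ => pd γ u x) (Pi.single α 1, 0)) * F x ^ 2 * dvol x := by
        rw [Finset.sum_mul, Finset.sum_mul]
        refine Finset.sum_congr rfl fun α _ => ?_
        simp only [hccdef, hSdef]
        ring
      have hR6 : ∑ γ, (dvol x * F x ^ 2 *
            (- (∑ β, ∑ δ, pd γ (fun y => ginv y β δ) x * pd β u x * pd δ u x))) *
              fderiv ℝ A (x, fun γ' => pd γ' u x) (0, Pi.single γ 1)
          = - ((∑ γ, fderiv ℝ A (x, fun γ' => pd γ' u x) (0, Pi.single γ 1) *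
              (∑ β, ∑ δ, pd γ (fun y => ginv y β δ) x * pd β u x * pd δ u x))
                * F x ^ 2 * dvol x) := by
        rw [Finset.sum_mul, Finset.sum_mul, ← Finset.sum_neg_distrib]
        refine Finset.sum_congr rfl fun γ _ => ?_
        ring
      have hR7 : ∑ γ, (∑ α, cc α x * pd α (pd γ u) x) *
            fderiv ℝ A (x, fun γ' => pd γ' u x) (0, Pi.single γ 1)
          = ∑ γ, (dvol x * F x ^ 2 *
              (- (∑ β, ∑ δ, pd γ (fun y => ginv y β δ) x * pd β u x * pd δ u x))) *
                fderiv ℝ A (x, fun γ' => pd γ' u x) (0, Pi.single γ 1) :=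
        Finset.sum_congr rfl fun γ _ => by rw [hR4 γ]
      rw [hR1, hR2, hR7, hR5, hR6]
      ring
  -- integral of the divergence vanishes
  have hpdV0 : ∀ α x, x ∉ K → pd α (V α) x = 0 := by
    intro α x hx
    apply NullDustAux.pd_zero_of_eventually
    filter_upwards [hKcopen.mem_nhds hx] with y hy
    exact hVK α y hy
  have hint : ∫ x in M, (∑ α, pd α (V α) x) = 0 := by
    have hsum0 : ∀ x, x ∉ M → (∑ α, pd α (V α) x) = 0 := by
      intro x hx
      have hxK : x ∉ K := fun h => hx (hKM h)
      exact Finset.sum_eq_zero fun α _ => hpdV0 α x hxK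
    rw [setIntegral_eq_integral_of_forall_compl_eq_zero (fun x hx => hsum0 x hx)]
    have hpdVcont : ∀ α, Continuous (fun x => pd α (V α) x) := by
      intro α
      have h1 : Continuous (fderiv ℝ (V α)) := (hVC1 α).continuous_fderiv one_ne_zero
      exact (ContinuousLinearMap.apply ℝ ℝ ((Pi.single α 1 : Fin 3 → ℝ))).continuous.comp h1
    have hsupp : ∀ α, HasCompactSupport (fun x => pd α (V α) x) := fun α =>
      HasCompactSupport.intro hKc (fun x hx => hpdV0 α x hx)
    have hking : ∀ α, Integrable (fun x => pd α (V α) x) := fun α =>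
      (hpdVcont α).integrable_of_hasCompactSupport (hsupp α)
    rw [integral_finset_sum _ (fun α _ => hking α)]
    apply Finset.sum_eq_zero
    intro α _
    have hVcont : Continuous (V α) := (hVC1 α).continuous
    have hVsupp : HasCompactSupport (V α) := HasCompactSupport.intro hKc (hVK α)
    have hVint : Integrable (V α) := hVcont.integrable_of_hasCompactSupport hVsupp
    have h1 : ∫ x, (fun _ => (1:ℝ)) x * fderiv ℝ (V α) x (Pi.single α 1) =
        - ∫ x, fderiv ℝ (fun _ => (1:ℝ)) x (Pi.single α 1) * V α x := by
      apply integral_mul_fderiv_eq_neg_fderiv_mul_of_integrable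
      · have h0 : (fun x => fderiv ℝ (fun _ => (1:ℝ)) x (Pi.single α 1) * V α x)
            = fun _ => (0:ℝ) := by
          funext x; simp
        rw [h0]; exact integrable_zero _ _ _
      · simpa [one_mul, pd] using hking α
      · simpa [one_mul] using hVint
      · exact fun y _ => differentiableAt_const _
      · exact fun y _ => (hVC1 α).differentiable one_ne_zero y
    simpa [pd] using h1
  calc ∫ x in M, ((∑ α, (2 * ∑ β, ginv x α β * pd β u x) *
          fderiv ℝ A (x, fun γ => pd γ u x) (Pi.single α 1, 0))
        - ∑ α, (fderiv ℝ A (x, fun γ => pd γ u x) (0, Pi.single α 1)) *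
            (∑ β, ∑ γ, pd α (fun y => ginv y β γ) x * pd β u x * pd γ u x))
        * (F x) ^ 2 * dvol x
      = ∫ x in M, (∑ α, pd α (V α) x) :=
        setIntegral_congr_fun hM.measurableSet (fun x hx => hkey x hx)
    _ = 0 := hint
end
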